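/- Let G be a connected graph, k a nonnegative integer, and S a minimal trivially perfect completion of G with |S| ≤ k; let H = G+S, and let L = (B, D) be a leaf block of the universal clique decomposition of H. If H is not a complete graph, then B = Ω₁ \ Ω₂ for some vital potential maximal cliques Ω₁, Ω₂ of (G,k), and D = B. -/

import Mathlib

open SimpleGraph

universe u

/-- A graph is *trivially perfect* if it has no induced subgraph isomorphic to `C₄` or `P₄`. -/
def TriviallyPerfect {V : Type u} (G : SimpleGraph V) : Prop :=
  IsEmpty (SimpleGraph.cycleGraph 4 ↪g G) ∧ IsEmpty (SimpleGraph.pathGraph 4 ↪g G)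

/-- A *universal clique decomposition* of a graph `G`: a finite rooted tree (modelled as a
finite partial order in which the set of elements above any element is a chain and which has
a top element, the root) together with a partition of the vertices into nonempty bags such that
adjacent vertices lie in comparable nodes, and each bag is exactly the set of universal
vertices of the subgraph induced by the union of the bags in the subtree below it. -/
structure UCD {V : Type u} (G : SimpleGraph V) : Type (u + 1) where
  ι : Type u
  [po : PartialOrder ι]
  [ot : OrderTop ι]
  [fin : Fintype ι]
  bag : ι → Set V
  bag_nonempty : ∀ t, (bag t).Nonempty
  bag_disjoint : ∀ s t, s ≠ t → Disjoint (bag s) (bag t)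
  bag_cover : ∀ v, ∃ t, v ∈ bag t
  up_chain : ∀ a b c : ι, a ≤ b → a ≤ c → b ≤ c ∨ c ≤ b
  adj_comparable : ∀ v w s t, G.Adj v w → v ∈ bag t → w ∈ bag s → s ≤ t ∨ t ≤ s
  bag_eq_universal : ∀ t, bag t =
    {v | (∃ s ≤ t, v ∈ bag s) ∧ ∀ w, (∃ s ≤ t, w ∈ bag s) → w ≠ v → G.Adj v w}

attribute [instance] UCD.po UCD.ot UCD.fin

namespace UCD

variable {V : Type u} {G : SimpleGraph V} (U : UCD G)

/-- `D_t`: the union of the bags in the subtree rooted at `t`. -/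
def subtreeSet (t : U.ι) : Set V := {v | ∃ s, s ≤ t ∧ v ∈ U.bag s}

/-- `Q_t`: the union of the bags on the path from `t` to the root. -/
def tailSet (t : U.ι) : Set V := {v | ∃ s, t ≤ s ∧ v ∈ U.bag s}

/-- `t` is a leaf of the decomposition tree. -/
def IsLeaf (t : U.ι) : Prop := ∀ s : U.ι, s ≤ t → s = t

end UCD

/-- `G + S`: the graph obtained from `G` by adding the pairs in `S` as edges. -/
def completes {V : Type u} (G : SimpleGraph V) (S : Set (Sym2 V)) : SimpleGraph V :=
  G ⊔ SimpleGraph.fromEdgeSet S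

/-- `S` is a set of non-edges of `G` (unordered pairs of distinct vertices, none an edge). -/
def IsCompletionSet {V : Type u} (G : SimpleGraph V) (S : Set (Sym2 V)) : Prop :=
  (∀ e ∈ S, ¬ e.IsDiag) ∧ Disjoint S G.edgeSet

/-- `S` is a minimal trivially perfect completion of `G`. -/
def IsMinTPCompletion {V : Type u} (G : SimpleGraph V) (S : Set (Sym2 V)) : Prop :=
  IsCompletionSet G S ∧ TriviallyPerfect (completes G S) ∧
    ∀ S' ⊂ S, ¬ TriviallyPerfect (completes G S')

/-- A vital potential maximal clique of `(G, k)`. -/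
def VitalPMC {V : Type u} (G : SimpleGraph V) (k : ℕ) (Ω : Set V) : Prop :=
  ∃ S, IsMinTPCompletion G S ∧ S.ncard ≤ k ∧ Maximal (completes G S).IsClique Ω

/-! Since `H` is not complete, the leaf `t` is not the root and has a parent `p`. The bag of `t`
is not universal in `D_p`, so some leaf `t' ≠ t` lies below `p`. The root paths `Q_t` and `Q_{t'}`
then share exactly the bags from `p` upwards, so `B_t = Q_t \ Q_{t'}`; and the root path of a
leaf is a maximal clique of `H`, hence a vital potential maximal clique. -/

namespace UCD

variable {V : Type u} {G : SimpleGraph V} (U : UCD G)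

lemma eq_of_mem_bag {v : V} {s t : U.ι} (hs : v ∈ U.bag s) (ht : v ∈ U.bag t) : s = t :=
  by_contra fun hst => (U.bag_disjoint s t hst).ne_of_mem hs ht rfl

lemma adj_of_bag_le {u s : U.ι} {w v : V} (hw : w ∈ U.bag u) (hs : s ≤ u)
    (hv : v ∈ U.bag s) (hvw : v ≠ w) : G.Adj v w := by
  rw [U.bag_eq_universal u] at hw
  exact (hw.2 v ⟨s, hs, hv⟩ hvw).symm

lemma subtreeSet_eq_bag {t : U.ι} (hleaf : U.IsLeaf t) : U.subtreeSet t = U.bag t := by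
  ext v
  exact ⟨fun ⟨s, hst, hv⟩ => hleaf s hst ▸ hv, fun hv => ⟨t, le_rfl, hv⟩⟩

lemma bag_subset_tailSet (t : U.ι) : U.bag t ⊆ U.tailSet t :=
  fun _ hv => ⟨t, le_rfl, hv⟩

lemma tailSet_isClique (t : U.ι) : G.IsClique (U.tailSet t) := by
  rintro v ⟨s, hts, hv⟩ w ⟨r, htr, hw⟩ hvw
  rcases U.up_chain t s r hts htr with hsr | hrs
  · exact U.adj_of_bag_le hw hsr hv hvw
  · exact (U.adj_of_bag_le hv hrs hw hvw.symm).symm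

lemma mem_tailSet_of_adj {t : U.ι} (hleaf : U.IsLeaf t) {v w : V}
    (hv : v ∈ U.bag t) (h : G.Adj v w) : w ∈ U.tailSet t := by
  obtain ⟨s, hw⟩ := U.bag_cover w
  rcases U.adj_comparable v w s t h hv hw with hst | hts
  · exact ⟨t, le_rfl, hleaf s hst ▸ hw⟩
  · exact ⟨s, hts, hw⟩

lemma maximal_isClique_tailSet {t : U.ι} (hleaf : U.IsLeaf t) :
    Maximal G.IsClique (U.tailSet t) := by
  refine ⟨U.tailSet_isClique t, fun C hC hsub x hx => ?_⟩
  obtain ⟨v, hv⟩ := U.bag_nonempty t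
  by_cases hxv : x = v
  · exact hxv ▸ U.bag_subset_tailSet t hv
  · exact U.mem_tailSet_of_adj hleaf hv (hC (hsub (U.bag_subset_tailSet t hv)) hx (Ne.symm hxv))

lemma eq_top_of_isLeaf_top (htop : U.IsLeaf ⊤) : G = ⊤ := by
  ext a b
  refine ⟨fun h => h.ne, fun hab => ?_⟩
  obtain ⟨s, ha⟩ := U.bag_cover a
  obtain ⟨r, hb⟩ := U.bag_cover b
  rw [htop s le_top] at ha
  rw [htop r le_top] at hb
  exact U.adj_of_bag_le hb le_rfl ha hab

lemma exists_isLeaf_le (s : U.ι) : ∃ t ≤ s, U.IsLeaf t := by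
  obtain ⟨t, hts, -, hmin⟩ := exists_minimal_le_of_wellFoundedLT (fun _ => True) s trivial
  exact ⟨t, hts, fun r hrt => le_antisymm hrt (hmin trivial hrt)⟩

/-- If every node below `u` were below `t`, the bag of `t` would be universal in `D_u`,
i.e. contained in the bag of `u`. -/
lemma exists_lt_not_le_of_lt {t u : U.ι} (htu : t < u) : ∃ s < u, ¬ s ≤ t := by
  by_contra! hbelow
  obtain ⟨x, hx⟩ := U.bag_nonempty t
  have hxu : x ∈ U.bag u := by
    rw [U.bag_eq_universal u]
    refine ⟨⟨t, htu.le, hx⟩, fun w ⟨s, hsu, hw⟩ hwx => ?_⟩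
    rcases hsu.eq_or_lt with rfl | hsu
    · exact U.adj_of_bag_le hw htu.le hx hwx.symm
    · exact (U.adj_of_bag_le hx (hbelow s hsu) hw hwx).symm
  exact htu.ne (U.eq_of_mem_bag hx hxu)

lemma le_of_covBy_of_lt {t p r : U.ι} (hp : t ⋖ p) (hr : t < r) : p ≤ r :=
  (U.up_chain t p r hp.le hr.le).elim id fun hrp => hrp.eq_or_lt.elim ge_of_eq (absurd · (hp.2 hr))

lemma bag_eq_tailSet_diff_tailSet {t p t' : U.ι} (hleaf : U.IsLeaf t) (hp : t ⋖ p)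
    (ht'p : t' < p) (ht't : t' ≠ t) : U.bag t = U.tailSet t \ U.tailSet t' := by
  ext x
  refine ⟨fun hx => ⟨U.bag_subset_tailSet t hx, fun ⟨r, ht'r, hxr⟩ => ?_⟩,
    fun ⟨⟨r, htr, hxr⟩, hx⟩ => ?_⟩
  · rw [U.eq_of_mem_bag hxr hx] at ht'r
    exact ht't (hleaf t' ht'r)
  · rcases htr.eq_or_lt with rfl | htr
    · exact hxr
    · exact absurd ⟨r, ht'p.le.trans (U.le_of_covBy_of_lt hp htr), hxr⟩ hx

lemma exists_isLeaf_bag_eq_tailSet_diff_tailSet {t : U.ι} (hleaf : U.IsLeaf t)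
    (htop : t ≠ ⊤) :
    ∃ t', U.IsLeaf t' ∧ U.bag t = U.tailSet t \ U.tailSet t' := by
  obtain ⟨p, hp⟩ := exists_covBy_of_wellFoundedLT (not_isMax_iff_ne_top.mpr htop)
  obtain ⟨s, hsp, hst⟩ := U.exists_lt_not_le_of_lt hp.lt
  obtain ⟨t', ht's, ht'⟩ := U.exists_isLeaf_le s
  refine ⟨t', ht', U.bag_eq_tailSet_diff_tailSet hleaf hp (ht's.trans_lt hsp) ?_⟩
  rintro rfl
  exact hp.2 (ht's.lt_of_not_ge hst) hsp

end UCD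

lemma vitalPMC_tailSet {V : Type u} {G : SimpleGraph V} {k : ℕ} {S : Set (Sym2 V)}
    (hS : IsMinTPCompletion G S) (hcard : S.ncard ≤ k) (U : UCD (completes G S)) {t : U.ι}
    (hleaf : U.IsLeaf t) : VitalPMC G k (U.tailSet t) :=
  ⟨S, hS, hcard, U.maximal_isClique_tailSet hleaf⟩

theorem minTPCompletion_leaf_block_structure_general {V : Type u}
    (G : SimpleGraph V) (k : ℕ)
    (S : Set (Sym2 V)) (hS : IsMinTPCompletion G S) (hcard : S.ncard ≤ k)
    (hne : completes G S ≠ ⊤)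
    (U : UCD (completes G S)) (t : U.ι) (hleaf : U.IsLeaf t) :
    (∃ Ω₁ Ω₂ : Set V, VitalPMC G k Ω₁ ∧ VitalPMC G k Ω₂ ∧ U.bag t = Ω₁ \ Ω₂) ∧
    U.subtreeSet t = U.bag t := by
  have htop : t ≠ ⊤ := fun h => hne (U.eq_top_of_isLeaf_top (h ▸ hleaf))
  obtain ⟨t', ht', hbag⟩ := U.exists_isLeaf_bag_eq_tailSet_diff_tailSet hleaf htop
  exact ⟨⟨U.tailSet t, U.tailSet t', vitalPMC_tailSet hS hcard U hleaf,
    vitalPMC_tailSet hS hcard U ht', hbag⟩, U.subtreeSet_eq_bag hleaf⟩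

/-- Structure of a leaf block `(B, D)` of the universal clique decomposition of a minimal
trivially perfect completion `H = G + S` with `|S| ≤ k`, when `H` is not complete:
`B = Ω₁ \ Ω₂` for vital potential maximal cliques `Ω₁`, `Ω₂`, and `D = B`. -/
theorem minTPCompletion_leaf_block_structure {V : Type u} [Fintype V]
    (G : SimpleGraph V) (hG : G.Connected) (k : ℕ)
    (S : Set (Sym2 V)) (hS : IsMinTPCompletion G S) (hcard : S.ncard ≤ k)
    (hne : completes G S ≠ ⊤)
    (U : UCD (completes G S)) (t : U.ι) (hleaf : U.IsLeaf t) :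
    (∃ Ω₁ Ω₂ : Set V, VitalPMC G k Ω₁ ∧ VitalPMC G k Ω₂ ∧ U.bag t = Ω₁ \ Ω₂) ∧
    U.subtreeSet t = U.bag t :=
  minTPCompletion_leaf_block_structure_general G k S hS hcard hne U t hleaf
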